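/- arXiv:2004.11642 — 4 statements merged into one kernel-verified Lean document; each statement's English description precedes it below -/
import Mathlib

section
/- Let n ∈ ℕ, let E be a linear subspace of ℝ^n, let s > 0, and let f : ℝ^n → [-1,1] be a measurable s-smooth function. Then the averaged function A_E f also takes values in [-1,1] and is s-smooth. -/
open MeasureTheory

/-- The standard Gaussian measure `γ_n` on `ℝ^n`: the product of `n` i.i.d. standard
Gaussians `N(0,1)`, transported to `EuclideanSpace ℝ (Fin n)`. -/
noncomputable def stdGaussian (n : ℕ) : Measure (EuclideanSpace ℝ (Fin n)) :=
  (Measure.pi fun _ : Fin n => ProbabilityTheory.gaussianReal 0 1).map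
    (MeasurableEquiv.toLp 2 (Fin n → ℝ))

/-- The orthogonal projection `Π_E` onto a subspace `E`, as a map of the ambient space. -/
noncomputable def proj {n : ℕ} (E : Submodule ℝ (EuclideanSpace ℝ (Fin n)))
    (x : EuclideanSpace ℝ (Fin n)) : EuclideanSpace ℝ (Fin n) :=
  (E.orthogonalProjectionOnto x : EuclideanSpace ℝ (Fin n))

/-- The averaging operator `A_E`: `(A_E f)(x) = ∫ f(Π_E x + Π_{E^⊥} z) dγ_n(z)`. -/
noncomputable def avg {n : ℕ} (E : Submodule ℝ (EuclideanSpace ℝ (Fin n)))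
    (f : EuclideanSpace ℝ (Fin n) → ℝ) (x : EuclideanSpace ℝ (Fin n)) : ℝ :=
  ∫ z, f (proj E x + proj Eᗮ z) ∂(stdGaussian n)

/-- The Ornstein–Uhlenbeck noise operator `P_t`:
`(P_t f)(x) = ∫ f(e^{-t} x + √(1 - e^{-2t}) y) dγ_n(y)`. -/
noncomputable def ouOp {n : ℕ} (t : ℝ) (f : EuclideanSpace ℝ (Fin n) → ℝ)
    (x : EuclideanSpace ℝ (Fin n)) : ℝ :=
  ∫ y, f (Real.exp (-t) • x + Real.sqrt (1 - Real.exp (-2 * t)) • y) ∂(stdGaussian n)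

/-- A function `f : ℝ^n → [-1,1]` is `s`-smooth if `∫ |f - P_t f| dγ_n ≤ s·√t` for all `t > 0`. -/
def SSmooth {n : ℕ} (s : ℝ) (f : EuclideanSpace ℝ (Fin n) → ℝ) : Prop :=
  ∀ t : ℝ, 0 < t → ∫ x, |f x - ouOp t f x| ∂(stdGaussian n) ≤ s * Real.sqrt t

/-- `f` is `c`-Lipschitz (with a real constant `c`). -/
def LipschitzC {E : Type*} [NormedAddCommGroup E] (c : ℝ) (f : E → ℝ) : Prop :=
  ∀ x y, |f x - f y| ≤ c * ‖x - y‖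

/-- `h : ℝ^n → ℝ` is a linear `k`-junta: it depends only on the projection onto a
subspace of dimension at most `k`. -/
def IsLinearJunta {n : ℕ} (k : ℕ) (h : EuclideanSpace ℝ (Fin n) → ℝ) : Prop :=
  ∃ F : Submodule ℝ (EuclideanSpace ℝ (Fin n)), Module.finrank ℝ F ≤ k ∧
    ∀ x z, proj F x = proj F z → h x = h z

/-- Frobenius norm of a matrix. -/
noncomputable def frobNorm {m n : ℕ} (M : Matrix (Fin m) (Fin n) ℝ) : ℝ :=
  Real.sqrt (∑ i, ∑ j, (M i j) ^ 2)

/-- Operator (spectral) norm of a matrix. -/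
noncomputable def specNorm {m n : ℕ} (M : Matrix (Fin m) (Fin n) ℝ) : ℝ :=
  ‖LinearMap.toContinuousLinearMap (Matrix.toEuclideanLin M)‖

/-- The `n×n` matrix of the orthogonal projection onto `E`. -/
noncomputable def projMatrix {n : ℕ} (E : Submodule ℝ (EuclideanSpace ℝ (Fin n))) :
    Matrix (Fin n) (Fin n) ℝ :=
  Matrix.of fun i j => proj E (EuclideanSpace.single j (1 : ℝ)) i

/-- View a vector of `ℝ^n` as a plain function `Fin n → ℝ`. -/
noncomputable def toPi {n : ℕ} (x : EuclideanSpace ℝ (Fin n)) : Fin n → ℝ := fun i => x i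

/-- View a plain function `Fin n → ℝ` as a vector of `ℝ^n`. -/
noncomputable def ofPi {n : ℕ} (v : Fin n → ℝ) : EuclideanSpace ℝ (Fin n) :=
  (EuclideanSpace.equiv (Fin n) ℝ).symm v

/-!
`A_E` integrates out the `E^⊥`-component against an independent Gaussian. Since
`(x, z) ↦ Π_E x + Π_{E^⊥} z` pushes `γ_n ⊗ γ_n` forward to `γ_n`, `A_E` is a contraction of
`L¹(γ_n)`. It also commutes with `P_t`: with `c = e^{-t}` and `σ = √(1 - e^{-2t})`, both
`P_t (A_E f) x` and `A_E (P_t f) x` integrate `f (c Π_E x + ·)` against the law of a centred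
Gaussian vector with covariance `σ² Π_E + Π_{E^⊥} = σ² I + c² Π_{E^⊥}`, which is pinned down by
its characteristic function. Hence `∫ |A_E f - P_t A_E f| = ∫ |A_E (f - P_t f)| ≤ ∫ |f - P_t f|`.
-/

section

variable {α β M F : Type*} [MeasurableSpace α] [MeasurableSpace β] [AddMonoid M]
  [MeasurableSpace M] [MeasurableAdd₂ M] [NormedAddCommGroup F] [NormedSpace ℝ F]

lemma MeasureTheory.Measure.map_conv_map {μ : Measure α} {ν : Measure β} [SFinite μ] [SFinite ν]
    {A : α → M} {B : β → M} (hA : Measurable A) (hB : Measurable B) :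
    μ.map A ∗ ν.map B = (μ.prod ν).map fun p => A p.1 + B p.2 := by
  rw [Measure.conv, Measure.map_prod_map μ ν hA hB, Measure.map_map (by fun_prop) (hA.prodMap hB)]
  rfl

lemma MeasureTheory.integral_map_conv_map {μ : Measure α} {ν : Measure β} [SFinite μ] [SFinite ν]
    {A : α → M} {B : β → M} (hA : Measurable A) (hB : Measurable B) {g : M → F}
    (hg : Integrable g (μ.map A ∗ ν.map B)) :
    ∫ w, g w ∂(μ.map A ∗ ν.map B) = ∫ x, ∫ y, g (A x + B y) ∂ν ∂μ := by
  rw [Measure.map_conv_map hA hB] at hg ⊢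
  rw [integral_map (by fun_prop) hg.1]
  exact integral_prod (fun p => g (A p.1 + B p.2))
    ((integrable_map_measure hg.1 (by fun_prop)).mp hg)

end

namespace ProbabilityTheory

open Complex ContinuousLinearMap

variable {V W : Type*} [NormedAddCommGroup V] [InnerProductSpace ℝ V] [MeasurableSpace V]
  [BorelSpace V] [NormedAddCommGroup W] [InnerProductSpace ℝ W] [MeasurableSpace W]
  [BorelSpace W]

lemma charFun_map_continuousLinearMap [CompleteSpace V] [CompleteSpace W] (μ : Measure V)
    (A : V →L[ℝ] W) (t : W) :
    charFun (μ.map A) t = charFun μ (adjoint A t) := by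
  rw [charFun_apply, charFun_apply, integral_map A.continuous.aemeasurable (by fun_prop)]
  simp_rw [adjoint_inner_right]

variable [FiniteDimensional ℝ V] [FiniteDimensional ℝ W]

lemma charFun_stdGaussian_map_conv_map (A B : V →L[ℝ] W) (t : W) :
    charFun ((stdGaussian V).map A ∗ (stdGaussian V).map B) t =
      exp (-((‖adjoint A t‖ ^ 2 + ‖adjoint B t‖ ^ 2 : ℝ) : ℂ) / 2) := by
  rw [charFun_conv, charFun_map_continuousLinearMap, charFun_map_continuousLinearMap,
    charFun_stdGaussian, charFun_stdGaussian, ← Complex.exp_add]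
  push_cast
  ring_nf

lemma stdGaussian_map_conv_map_eq {A B C D : V →L[ℝ] W}
    (h : ∀ t, ‖adjoint A t‖ ^ 2 + ‖adjoint B t‖ ^ 2 = ‖adjoint C t‖ ^ 2 + ‖adjoint D t‖ ^ 2) :
    (stdGaussian V).map A ∗ (stdGaussian V).map B =
      (stdGaussian V).map C ∗ (stdGaussian V).map D :=
  Measure.ext_of_charFun <| funext fun t => by
    rw [charFun_stdGaussian_map_conv_map, charFun_stdGaussian_map_conv_map, h]

lemma stdGaussian_map_conv_map_eq_stdGaussian {A B : V →L[ℝ] W}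
    (h : ∀ t, ‖adjoint A t‖ ^ 2 + ‖adjoint B t‖ ^ 2 = ‖t‖ ^ 2) :
    (stdGaussian V).map A ∗ (stdGaussian V).map B = stdGaussian W :=
  Measure.ext_of_charFun <| funext fun t => by
    rw [charFun_stdGaussian_map_conv_map, charFun_stdGaussian, h]
    push_cast
    ring_nf

variable (K : Submodule ℝ V)

lemma stdGaussian_map_starProjection_conv_orthogonal :
    (stdGaussian V).map K.starProjection ∗ (stdGaussian V).map Kᗮ.starProjection =
      stdGaussian V :=
  stdGaussian_map_conv_map_eq_stdGaussian fun t => by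
    simp only [(isSelfAdjoint_starProjection _).adjoint_eq]
    exact (K.norm_sq_eq_add_norm_sq_starProjection t).symm

lemma stdGaussian_map_smul_starProjection_conv_orthogonal {c σ : ℝ} (h : c ^ 2 + σ ^ 2 = 1) :
    (stdGaussian V).map ⇑(σ • K.starProjection) ∗ (stdGaussian V).map Kᗮ.starProjection =
      (stdGaussian V).map ⇑(c • Kᗮ.starProjection) ∗
        (stdGaussian V).map ⇑(σ • ContinuousLinearMap.id ℝ V) :=
  stdGaussian_map_conv_map_eq fun t => by
    simp only [map_smulₛₗ, adjoint_id, (isSelfAdjoint_starProjection _).adjoint_eq,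
      RCLike.conj_to_real, smul_apply, id_apply, norm_smul, mul_pow, Real.norm_eq_abs, sq_abs]
    linear_combination
      -‖Kᗮ.starProjection t‖ ^ 2 * h - σ ^ 2 * K.norm_sq_eq_add_norm_sq_starProjection t

end ProbabilityTheory

lemma stdGaussian_eq (n : ℕ) :
    stdGaussian n = ProbabilityTheory.stdGaussian (EuclideanSpace ℝ (Fin n)) := by
  rw [stdGaussian, MeasurableEquiv.coe_toLp, ProbabilityTheory.map_pi_eq_stdGaussian]

instance isProbabilityMeasure_stdGaussian (n : ℕ) : IsProbabilityMeasure (stdGaussian n) :=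
  stdGaussian_eq n ▸ inferInstance

section

variable {n : ℕ} (E : Submodule ℝ (EuclideanSpace ℝ (Fin n)))

lemma proj_eq_starProjection : proj E = E.starProjection := rfl

@[fun_prop]
lemma continuous_proj : Continuous (proj E) := E.starProjection.continuous

lemma abs_avg_le {f : EuclideanSpace ℝ (Fin n) → ℝ} {C : ℝ} (hf : ∀ x, |f x| ≤ C) (x) :
    |avg E f x| ≤ C := by
  simpa [avg] using norm_integral_le_of_norm_le_const (μ := stdGaussian n)
    (f := fun z => f (proj E x + proj Eᗮ z)) (ae_of_all _ fun z => hf _)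

lemma abs_ouOp_le {f : EuclideanSpace ℝ (Fin n) → ℝ} {C : ℝ} (hf : ∀ x, |f x| ≤ C) (t x) :
    |ouOp t f x| ≤ C := by
  simpa [ouOp] using norm_integral_le_of_norm_le_const (μ := stdGaussian n)
    (f := fun y => f (Real.exp (-t) • x + Real.sqrt (1 - Real.exp (-2 * t)) • y))
    (ae_of_all _ fun y => hf _)

lemma measurable_ouOp {f : EuclideanSpace ℝ (Fin n) → ℝ} (hf : Measurable f) (t : ℝ) :
    Measurable (ouOp t f) :=
  (hf.comp (by fun_prop : Measurable fun p : _ × EuclideanSpace ℝ (Fin n) =>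
    Real.exp (-t) • p.1 + Real.sqrt (1 - Real.exp (-2 * t)) • p.2)).stronglyMeasurable
    |>.integral_prod_right' |>.measurable

lemma avg_sub {f g : EuclideanSpace ℝ (Fin n) → ℝ} (hf : Measurable f) (hg : Measurable g)
    {C D : ℝ} (hfC : ∀ x, |f x| ≤ C) (hgD : ∀ x, |g x| ≤ D) :
    avg E (f - g) = avg E f - avg E g := by
  funext x
  have hφ : Measurable fun z => proj E x + proj Eᗮ z := by fun_prop
  exact integral_sub (.of_bound (hf.comp hφ).aestronglyMeasurable C (ae_of_all _ fun _ => hfC _))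
    (.of_bound (hg.comp hφ).aestronglyMeasurable D (ae_of_all _ fun _ => hgD _))

lemma ouOp_avg_eq_avg_ouOp {t : ℝ} (ht : 0 ≤ t) {f : EuclideanSpace ℝ (Fin n) → ℝ}
    (hf : Measurable f) {C : ℝ} (hC : ∀ x, |f x| ≤ C) :
    ouOp t (avg E f) = avg E (ouOp t f) := by
  funext x
  set c := Real.exp (-t)
  set σ := Real.sqrt (1 - Real.exp (-2 * t))
  have hcσ : c ^ 2 + σ ^ 2 = 1 := by
    have : Real.exp (-2 * t) ≤ 1 := Real.exp_le_one_iff.2 (by linarith)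
    rw [Real.sq_sqrt (by linarith), ← Real.exp_nat_mul]
    ring_nf
  set g := fun w => f (c • proj E x + w)
  have hg : ∀ μ : Measure (EuclideanSpace ℝ (Fin n)), IsFiniteMeasure μ → Integrable g μ :=
    fun μ _ => .of_bound (hf.comp (by fun_prop)).aestronglyMeasurable C (ae_of_all _ fun _ => hC _)
  calc ouOp t (avg E f) x
      = ∫ w, g w ∂((stdGaussian n).map ⇑(σ • E.starProjection) ∗
          (stdGaussian n).map Eᗮ.starProjection) := by
        rw [integral_map_conv_map (by fun_prop) (by fun_prop) (hg _ inferInstance)]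
        refine integral_congr_ae (ae_of_all _ fun y => integral_congr_ae (ae_of_all _ fun z => ?_))
        simp only [g, proj_eq_starProjection, map_add, map_smul, smul_apply, add_assoc]
        rfl
    _ = ∫ w, g w ∂((stdGaussian n).map ⇑(c • Eᗮ.starProjection) ∗
          (stdGaussian n).map ⇑(σ • ContinuousLinearMap.id ℝ _)) := by
        rw [stdGaussian_eq,
          ProbabilityTheory.stdGaussian_map_smul_starProjection_conv_orthogonal E hcσ]
    _ = avg E (ouOp t f) x := by
        rw [integral_map_conv_map (by fun_prop) (by fun_prop) (hg _ inferInstance)]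
        refine integral_congr_ae (ae_of_all _ fun z => integral_congr_ae (ae_of_all _ fun y => ?_))
        simp only [g, proj_eq_starProjection, smul_apply, ContinuousLinearMap.id_apply, smul_add,
          add_assoc]
        rfl

lemma integral_abs_avg_le {g : EuclideanSpace ℝ (Fin n) → ℝ} (hg : Integrable g (stdGaussian n)) :
    ∫ x, |avg E g x| ∂(stdGaussian n) ≤ ∫ x, |g x| ∂(stdGaussian n) := by
  have hγ : ((stdGaussian n).prod (stdGaussian n)).map (fun p => proj E p.1 + proj Eᗮ p.2) =
      stdGaussian n := by
    rw [← Measure.map_conv_map (by fun_prop) (by fun_prop), stdGaussian_eq]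
    exact ProbabilityTheory.stdGaussian_map_starProjection_conv_orthogonal E
  have hgL : Integrable (fun p => |g (proj E p.1 + proj Eᗮ p.2)|)
      ((stdGaussian n).prod (stdGaussian n)) := by
    rw [← hγ] at hg
    exact ((integrable_map_measure hg.1 (by fun_prop)).mp hg).abs
  calc ∫ x, |avg E g x| ∂(stdGaussian n)
      ≤ ∫ x, ∫ z, |g (proj E x + proj Eᗮ z)| ∂(stdGaussian n) ∂(stdGaussian n) :=
        integral_mono_of_nonneg (ae_of_all _ fun _ => abs_nonneg _) hgL.integral_prod_left
          (ae_of_all _ fun _ => abs_integral_le_integral_abs)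
    _ = ∫ p, |g (proj E p.1 + proj Eᗮ p.2)| ∂((stdGaussian n).prod (stdGaussian n)) :=
        (integral_prod _ hgL).symm
    _ = ∫ x, |g x| ∂((stdGaussian n).prod (stdGaussian n)).map
          fun p => proj E p.1 + proj Eᗮ p.2 :=
        (integral_map (f := fun x => |g x|) (by fun_prop) (by rw [hγ]; exact hg.abs.1)).symm
    _ = ∫ x, |g x| ∂(stdGaussian n) := by rw [hγ]

end

theorem avg_sSmooth_general {n : ℕ} (E : Submodule ℝ (EuclideanSpace ℝ (Fin n))) (s : ℝ)
    (f : EuclideanSpace ℝ (Fin n) → ℝ) (hmeas : Measurable f)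
    (hrange : ∀ x, f x ∈ Set.Icc (-1 : ℝ) 1) (hsm : SSmooth s f) :
    (∀ x, avg E f x ∈ Set.Icc (-1 : ℝ) 1) ∧ SSmooth s (avg E f) := by
  have hf : ∀ x, |f x| ≤ 1 := fun x => abs_le.2 (hrange x)
  refine ⟨fun x => abs_le.1 (abs_avg_le E hf x), fun t ht => ?_⟩
  have hPf : Measurable (ouOp t f) := measurable_ouOp hmeas t
  calc ∫ x, |avg E f x - ouOp t (avg E f) x| ∂(stdGaussian n)
      = ∫ x, |avg E (f - ouOp t f) x| ∂(stdGaussian n) := by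
        rw [ouOp_avg_eq_avg_ouOp E ht.le hmeas hf, avg_sub E hmeas hPf hf (abs_ouOp_le hf t)]
        rfl
    _ ≤ ∫ x, |f x - ouOp t f x| ∂(stdGaussian n) :=
        integral_abs_avg_le E (.of_bound (hmeas.sub hPf).aestronglyMeasurable 2
          (ae_of_all _ fun x => (abs_sub _ _).trans (by linarith [hf x, abs_ouOp_le hf t x])))
    _ ≤ s * √t := hsm t ht

/-- if `f : ℝ^n → [-1,1]` is `s`-smooth then so is `A_E f`. -/
theorem avg_sSmooth {n : ℕ} (E : Submodule ℝ (EuclideanSpace ℝ (Fin n))) (s : ℝ) (hs : 0 < s)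
    (f : EuclideanSpace ℝ (Fin n) → ℝ) (hmeas : Measurable f)
    (hrange : ∀ x, f x ∈ Set.Icc (-1 : ℝ) 1) (hsm : SSmooth s f) :
    (∀ x, avg E f x ∈ Set.Icc (-1 : ℝ) 1) ∧ SSmooth s (avg E f) :=
  avg_sSmooth_general E s f hmeas hrange hsm
end

section
/- Let m ≤ n be natural numbers and let X be a real m×n matrix of rank m. Then there exists a real m×n matrix Y with orthonormal rows (i.e., Y·Yᵀ = I_m) such that ‖X − Y‖_F ≤ ‖X·Xᵀ − I_m‖_F. -/
open MeasureTheory Matrix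

/-!
Write `X Xᵀ = U diag(s²) Uᵀ` with `U` orthogonal and `s > 0`, and take the polar factor
`Y = (X Xᵀ)^(-1/2) X = U diag(s⁻¹) Uᵀ X`, so that `Y Yᵀ = 1`. In the eigenbasis of `X Xᵀ` the
squared Frobenius norms become `‖X - Y‖² = ∑ (sᵢ - 1)²` and
`‖X Xᵀ - 1‖² = ∑ (sᵢ² - 1)² = ∑ (sᵢ - 1)² (sᵢ + 1)²`, and `(sᵢ + 1)² ≥ 1`.
-/

lemma frobNorm_eq_sqrt_trace {m n : ℕ} (M : Matrix (Fin m) (Fin n) ℝ) :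
    frobNorm M = √(M * Mᵀ).trace := by
  simp [frobNorm, trace, mul_apply, sq]

lemma isUnit_of_rank_eq_card {ι R : Type*} [Fintype ι] [DecidableEq ι] [Field R]
    {A : Matrix ι ι R} (h : A.rank = Fintype.card ι) : IsUnit A := by
  rw [← mulVec_surjective_iff_isUnit, ← coe_mulVecLin, ← LinearMap.range_eq_top]
  exact Submodule.eq_top_of_finrank_eq (by rw [← rank, h, Module.finrank_fintype_fun_eq_card])

lemma posDef_mul_transpose_of_rank_eq {ι κ : Type*} [Fintype ι] [Fintype κ] [DecidableEq ι]
    {X : Matrix ι κ ℝ} (h : X.rank = Fintype.card ι) : (X * Xᵀ).PosDef := by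
  have hpsd : (X * Xᵀ).PosSemidef := by
    simpa using posSemidef_self_mul_conjTranspose X
  exact hpsd.posDef_iff_isUnit.mpr (isUnit_of_rank_eq_card (by rw [rank_self_mul_transpose, h]))

section ConjDiagonal

variable {ι R : Type*} [Fintype ι] [DecidableEq ι] [CommRing R] {U : Matrix ι ι R}

lemma conj_diagonal_one (hU : Uᵀ * U = 1) : U * diagonal 1 * Uᵀ = 1 := by
  rw [Pi.one_def, diagonal_one, mul_one, mul_eq_one_comm.mp hU]

lemma conj_diagonal_sub (e f : ι → R) :
    U * diagonal e * Uᵀ - U * diagonal f * Uᵀ = U * diagonal (e - f) * Uᵀ := by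
  rw [← sub_mul, ← mul_sub, diagonal_sub]
  rfl

lemma transpose_conj_diagonal (e : ι → R) : (U * diagonal e * Uᵀ)ᵀ = U * diagonal e * Uᵀ := by
  rw [transpose_mul, transpose_mul, transpose_transpose, diagonal_transpose, mul_assoc]

lemma conj_diagonal_mul_conj_diagonal (hU : Uᵀ * U = 1) (e f : ι → R) :
    U * diagonal e * Uᵀ * (U * diagonal f * Uᵀ) = U * diagonal (e * f) * Uᵀ := by
  simp only [← mul_assoc]
  rw [mul_assoc (U * diagonal e), hU, mul_one, mul_assoc U, diagonal_mul_diagonal]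
  rfl

lemma trace_conj_diagonal (hU : Uᵀ * U = 1) (e : ι → R) :
    (U * diagonal e * Uᵀ).trace = ∑ i, e i := by
  rw [trace_mul_comm, ← mul_assoc, hU, one_mul, trace_diagonal]

lemma conj_diagonal_mul_mul_transpose {κ : Type*} [Fintype κ] (hU : Uᵀ * U = 1)
    {X : Matrix ι κ R} {d : ι → R} (hX : X * Xᵀ = U * diagonal d * Uᵀ) (e : ι → R) :
    U * diagonal e * Uᵀ * X * (U * diagonal e * Uᵀ * X)ᵀ = U * diagonal (e * d * e) * Uᵀ := by
  rw [transpose_mul, transpose_conj_diagonal, Matrix.mul_assoc, ← Matrix.mul_assoc X, hX,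
    conj_diagonal_mul_conj_diagonal hU, conj_diagonal_mul_conj_diagonal hU, ← mul_assoc e]

end ConjDiagonal

lemma Matrix.PosDef.exists_eq_conj_diagonal_sq {ι : Type*} [Fintype ι] [DecidableEq ι]
    {A : Matrix ι ι ℝ} (hA : A.PosDef) :
    ∃ (U : Matrix ι ι ℝ) (s : ι → ℝ), Uᵀ * U = 1 ∧ (∀ i, 0 < s i) ∧
      A = U * diagonal (s ^ 2) * Uᵀ := by
  refine ⟨hA.1.eigenvectorUnitary, fun i => √(hA.1.eigenvalues i), ?_, fun i => ?_, ?_⟩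
  · simpa [star_eq_conjTranspose] using (mem_unitaryGroup_iff').mp hA.1.eigenvectorUnitary.2
  · exact Real.sqrt_pos.mpr (hA.eigenvalues_pos i)
  · have hsq : (fun i => √(hA.1.eigenvalues i)) ^ 2 = hA.1.eigenvalues := by
      ext i
      simp [Real.sq_sqrt (hA.eigenvalues_pos i).le]
    rw [hsq]
    simpa [star_eq_conjTranspose] using hA.1.spectral_theorem

lemma sq_sub_one_le_sq_sq_sub_one {s : ℝ} (hs : 0 ≤ s) : (s - 1) ^ 2 ≤ (s ^ 2 - 1) ^ 2 := by
  have : (s ^ 2 - 1) ^ 2 = (s - 1) ^ 2 * (s + 1) ^ 2 := by ring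
  rw [this]
  exact le_mul_of_one_le_right (sq_nonneg _) (one_le_pow₀ (by linarith))

theorem approximate_projection_general {m n : ℕ} (X : Matrix (Fin m) (Fin n) ℝ)
    (hrank : X.rank = m) :
    ∃ Y : Matrix (Fin m) (Fin n) ℝ, Y * Yᵀ = 1 ∧
      frobNorm (X - Y) ≤ frobNorm (X * Xᵀ - 1) := by
  obtain ⟨U, s, hU, hs, hXX⟩ :=
    (posDef_mul_transpose_of_rank_eq (X := X) (by simpa using hrank)).exists_eq_conj_diagonal_sq
  have hs0 : ∀ i, s i ≠ 0 := fun i => (hs i).ne'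
  refine ⟨U * diagonal s⁻¹ * Uᵀ * X, ?_, ?_⟩
  · rw [conj_diagonal_mul_mul_transpose hU hXX, ← conj_diagonal_one hU]
    congr
    ext i
    simp only [Pi.mul_apply, Pi.inv_apply, Pi.pow_apply, Pi.one_apply]
    field_simp [hs0 i]
  · have hXY : X - U * diagonal s⁻¹ * Uᵀ * X = U * diagonal (1 - s⁻¹) * Uᵀ * X := by
      rw [← conj_diagonal_sub, conj_diagonal_one hU, Matrix.sub_mul, Matrix.one_mul]
    rw [frobNorm_eq_sqrt_trace, frobNorm_eq_sqrt_trace, hXY, conj_diagonal_mul_mul_transpose hU hXX,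
      trace_conj_diagonal hU, hXX, ← conj_diagonal_one hU, conj_diagonal_sub,
      transpose_conj_diagonal, conj_diagonal_mul_conj_diagonal hU, trace_conj_diagonal hU]
    gcongr with i
    have hdiag : (1 - (s i)⁻¹) * s i ^ 2 * (1 - (s i)⁻¹) = (s i - 1) ^ 2 := by
      field_simp [hs0 i]
    simpa [hdiag, ← sq] using sq_sub_one_le_sq_sq_sub_one (hs i).le

/-- any full-rank `m×n` matrix is approximated by a matrix with
orthonormal rows up to `‖X·Xᵀ − I‖_F` in Frobenius norm. -/
theorem approximate_projection {m n : ℕ} (hmn : m ≤ n) (X : Matrix (Fin m) (Fin n) ℝ)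
    (hrank : X.rank = m) :
    ∃ Y : Matrix (Fin m) (Fin n) ℝ, Y * Yᵀ = 1 ∧
      frobNorm (X - Y) ≤ frobNorm (X * Xᵀ - 1) :=
  approximate_projection_general X hrank
end

section
/- Let A and Ã be real positive semidefinite n×n matrices and let η > 0. Let V be the span of the eigenvectors of A with eigenvalue at least η, and let Π_V be the orthogonal projection onto V. Let A_{≥η}^{-1} denote the η-truncated pseudoinverse of A, and Ã_{≥η/2}^{-1} the (η/2)-truncated pseudoinverse of Ã. Then ‖(A_{≥η}^{-1} − Ã_{≥η/2}^{-1})·Π_V‖₂ ≤ 20·‖A‖_F·√(‖A − Ã‖₂) / η^{5/2}. -/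
open MeasureTheory

/-!
Write `R = A_{≥η}^{-1}`, `B = Ã_{≥η/2}^{-1}`, `Q = Π_V`, and let `P` be the spectral projection of
`Ã` onto its eigenvalues `< η/2`. From `AR = Q`, `BÃ = 1 - P` and `RQ = QR = R` one gets
`(R - B)Q = PQR + B(Ã - A)R`. The spectral gap between `V` (eigenvalues `≥ η` of `A`) and the
range of `P` (eigenvalues `< η/2` of `Ã`) makes `PQ` small: `PQ = P(A - Ã)R + (PÃ)(PQ)R` with
`‖PÃ‖‖R‖ ≤ 1/2`, so `‖PQ‖ ≤ 2ε/η` for `ε = ‖A - Ã‖₂`. Hence `‖(R - B)Q‖ ≤ 4ε/η²`; together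
with the trivial bound `3/η` this gives `‖(R - B)Q‖ ≤ 4√ε/η^{3/2}`, and `η ≤ ‖A‖₂ ≤ ‖A‖_F` unless
`V = 0`.
-/

open Matrix
open scoped Matrix.Norms.L2Operator

lemma norm_le_two_mul_of_eq_add_mul_mul {α : Type*} [SeminormedRing α] {x y a b : α}
    (h : x = y + a * x * b) (hab : ‖a‖ * ‖b‖ ≤ 1 / 2) : ‖x‖ ≤ 2 * ‖y‖ := by
  have : ‖x‖ ≤ ‖y‖ + ‖a‖ * ‖b‖ * ‖x‖ :=
    calc ‖x‖ = ‖y + a * x * b‖ := congrArg _ h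
      _ ≤ ‖y‖ + ‖a‖ * ‖x‖ * ‖b‖ := (norm_add_le _ _).trans (add_le_add_right (norm_mul₃_le ..) _)
      _ = ‖y‖ + ‖a‖ * ‖b‖ * ‖x‖ := by ring
  nlinarith [norm_nonneg x]

lemma le_of_le_four_mul_div_sq_of_le_three_div {x ε η f : ℝ} (hη : 0 < η) (hε : 0 ≤ ε)
    (hf : η ≤ f) (hx₁ : x ≤ 4 * ε / η ^ 2) (hx₂ : x ≤ 3 / η) :
    x ≤ 20 * f * √ε / η ^ ((5 : ℝ) / 2) := by
  have hpow : η ^ ((5 : ℝ) / 2) = √η ^ 5 := by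
    rw [Real.sqrt_eq_rpow, ← Real.rpow_natCast, ← Real.rpow_mul hη.le]; norm_num
  obtain ⟨s, hs, rfl⟩ : ∃ s, 0 < s ∧ η = s ^ 2 := ⟨√η, by positivity, (Real.sq_sqrt hη.le).symm⟩
  obtain ⟨t, ht, rfl⟩ : ∃ t, 0 ≤ t ∧ ε = t ^ 2 := ⟨√ε, by positivity, (Real.sq_sqrt hε).symm⟩
  rw [hpow, Real.sqrt_sq hs.le, Real.sqrt_sq ht]
  have htf : t * s ^ 2 ≤ t * f := mul_le_mul_of_nonneg_left hf ht
  rcases le_total t s with hts | hst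
  · have : t ^ 2 * s ≤ t * s ^ 2 := by
      nlinarith [mul_le_mul_of_nonneg_left hts (mul_nonneg ht hs.le)]
    calc x ≤ 4 * t ^ 2 / (s ^ 2) ^ 2 := hx₁
      _ = 4 * (t ^ 2 * s) / s ^ 5 := by field_simp
      _ ≤ 20 * f * t / s ^ 5 := div_le_div_of_nonneg_right (by nlinarith) (by positivity)
  · have : s ^ 3 ≤ t * s ^ 2 := by nlinarith [mul_le_mul_of_nonneg_left hst (sq_nonneg s)]
    calc x ≤ 3 / s ^ 2 := hx₂
      _ = 3 * s ^ 3 / s ^ 5 := by field_simp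
      _ ≤ 20 * f * t / s ^ 5 := div_le_div_of_nonneg_right (by nlinarith) (by positivity)

variable {n : ℕ}

lemma specNorm_eq_norm (M : Matrix (Fin n) (Fin n) ℝ) : specNorm M = ‖M‖ := rfl

lemma specNorm_le_frobNorm {m : ℕ} (M : Matrix (Fin m) (Fin n) ℝ) : specNorm M ≤ frobNorm M := by
  refine ContinuousLinearMap.opNorm_le_bound _ (Real.sqrt_nonneg _) fun x => ?_
  rw [LinearMap.coe_toContinuousLinearMap', toLpLin_apply, EuclideanSpace.norm_eq,
    EuclideanSpace.norm_eq, frobNorm, ← Real.sqrt_mul (by positivity), Finset.sum_mul]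
  refine Real.sqrt_le_sqrt (Finset.sum_le_sum fun i _ => ?_)
  simpa [mulVec, dotProduct] using Finset.sum_mul_sq_le_sq_mul_sq Finset.univ (M i) x

section Truncation

variable {ι : Type*}

noncomputable def truncInv (η : ℝ) (c : ι → ℝ) : ι → ℝ := fun i => if η ≤ c i then (c i)⁻¹ else 0

noncomputable def truncIndicator (η : ℝ) (c : ι → ℝ) : ι → ℝ := fun i => if η ≤ c i then 1 else 0

lemma truncInv_mul_truncIndicator (η : ℝ) (c : ι → ℝ) :
    truncInv η c * truncIndicator η c = truncInv η c := by
  ext i; by_cases h : η ≤ c i <;> simp [truncInv, truncIndicator, h]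

lemma mul_truncInv {η : ℝ} (hη : 0 < η) (c : ι → ℝ) : c * truncInv η c = truncIndicator η c := by
  ext i
  by_cases h : η ≤ c i
  · simp [truncInv, truncIndicator, h, (hη.trans_le h).ne']
  · simp [truncInv, truncIndicator, h]

lemma one_sub_truncIndicator_mul_self (η : ℝ) (c : ι → ℝ) :
    (1 - truncIndicator η c) * (1 - truncIndicator η c) = 1 - truncIndicator η c := by
  ext i; by_cases h : η ≤ c i <;> simp [truncIndicator, h]

variable [Fintype ι]

lemma norm_truncInv_le {η : ℝ} (hη : 0 < η) (c : ι → ℝ) : ‖truncInv η c‖ ≤ η⁻¹ := by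
  refine (pi_norm_le_iff_of_nonneg (by positivity)).mpr fun i => ?_
  by_cases h : η ≤ c i
  · simpa [truncInv, h, abs_of_pos (hη.trans_le h)] using inv_anti₀ hη h
  · simp [truncInv, h, hη.le]

lemma norm_truncIndicator_le (η : ℝ) (c : ι → ℝ) : ‖truncIndicator η c‖ ≤ 1 :=
  (pi_norm_le_iff_of_nonneg zero_le_one).mpr fun i => by
    by_cases h : η ≤ c i <;> simp [truncIndicator, h]

lemma norm_one_sub_truncIndicator_le (η : ℝ) (c : ι → ℝ) : ‖1 - truncIndicator η c‖ ≤ 1 :=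
  (pi_norm_le_iff_of_nonneg zero_le_one).mpr fun i => by
    by_cases h : η ≤ c i <;> simp [truncIndicator, h]

lemma norm_one_sub_truncIndicator_mul_le {η : ℝ} (hη : 0 ≤ η) {c : ι → ℝ} (hc : 0 ≤ c) :
    ‖(1 - truncIndicator η c) * c‖ ≤ η :=
  (pi_norm_le_iff_of_nonneg hη).mpr fun i => by
    by_cases h : η ≤ c i
    · simp [truncIndicator, h, hη]
    · simpa [truncIndicator, h, abs_of_nonneg (hc i)] using (not_le.mp h).le

end Truncation

noncomputable def spectralSum (v : Fin n → EuclideanSpace ℝ (Fin n)) (c : Fin n → ℝ) :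
    Matrix (Fin n) (Fin n) ℝ :=
  ∑ i, c i • vecMulVec (toPi (v i)) (toPi (v i))

noncomputable def frame (v : Fin n → EuclideanSpace ℝ (Fin n)) : Matrix (Fin n) (Fin n) ℝ :=
  of fun i j => v i j

lemma spectralSum_eq_transpose_mul_diagonal_mul (v : Fin n → EuclideanSpace ℝ (Fin n))
    (c : Fin n → ℝ) : spectralSum v c = (frame v)ᵀ * diagonal c * frame v := by
  ext a b
  rw [mul_apply]
  simp only [mul_diagonal, spectralSum, Matrix.sum_apply, Matrix.smul_apply, vecMulVec_apply,
    transpose_apply, frame, of_apply, toPi, smul_eq_mul]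
  exact Finset.sum_congr rfl fun i _ => by ring

lemma frame_mul_transpose {v : Fin n → EuclideanSpace ℝ (Fin n)} (hv : Orthonormal ℝ v) :
    frame v * (frame v)ᵀ = 1 := by
  ext i j
  simpa [frame, mul_apply, one_apply, PiLp.inner_apply, mul_comm] using
    orthonormal_iff_ite.mp hv i j

lemma frame_mem_unitaryGroup {v : Fin n → EuclideanSpace ℝ (Fin n)} (hv : Orthonormal ℝ v) :
    frame v ∈ unitaryGroup (Fin n) ℝ := by
  rw [mem_unitaryGroup_iff, star_eq_conjTranspose, conjTranspose_eq_transpose_of_trivial]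
  exact frame_mul_transpose hv

section Orthonormal

variable {v : Fin n → EuclideanSpace ℝ (Fin n)} (hv : Orthonormal ℝ v)
include hv

lemma spectralSum_mul_spectralSum (c d : Fin n → ℝ) :
    spectralSum v c * spectralSum v d = spectralSum v (c * d) := by
  simp only [spectralSum_eq_transpose_mul_diagonal_mul, Matrix.mul_assoc,
    ← Matrix.mul_assoc (frame v), frame_mul_transpose hv, Matrix.one_mul,
    ← Matrix.mul_assoc (diagonal c), diagonal_mul_diagonal', Pi.mul_def]

lemma spectralSum_one : spectralSum v 1 = 1 := by
  rw [spectralSum_eq_transpose_mul_diagonal_mul, Pi.one_def, diagonal_one, Matrix.mul_one,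
    mul_eq_one_comm.mp (frame_mul_transpose hv)]

lemma norm_spectralSum (c : Fin n → ℝ) : ‖spectralSum v c‖ = ‖c‖ := by
  have hW := frame_mem_unitaryGroup hv
  have hWt : (frame v)ᵀ ∈ unitaryGroup (Fin n) ℝ := by
    simpa [star_eq_conjTranspose, conjTranspose_eq_transpose_of_trivial] using
      Unitary.star_mem hW
  rw [spectralSum_eq_transpose_mul_diagonal_mul, CStarRing.norm_mul_mem_unitary _ hW,
    CStarRing.norm_mem_unitary_mul _ hWt, l2_opNorm_diagonal]

lemma norm_spectralSum_truncInv_le {η : ℝ} (hη : 0 < η) (c : Fin n → ℝ) :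
    ‖spectralSum v (truncInv η c)‖ ≤ η⁻¹ :=
  (norm_spectralSum hv _).trans_le (norm_truncInv_le hη c)

end Orthonormal

@[simp]
lemma spectralSum_zero (v : Fin n → EuclideanSpace ℝ (Fin n)) : spectralSum v 0 = 0 := by
  simp [spectralSum]

lemma spectralSum_sub (v : Fin n → EuclideanSpace ℝ (Fin n)) (c d : Fin n → ℝ) :
    spectralSum v (c - d) = spectralSum v c - spectralSum v d := by
  rw [spectralSum_eq_transpose_mul_diagonal_mul, spectralSum_eq_transpose_mul_diagonal_mul,
    spectralSum_eq_transpose_mul_diagonal_mul, ← Matrix.sub_mul, ← Matrix.mul_sub, diagonal_sub]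
  rfl

lemma spectralSum_truncInv_eq_sum (v : Fin n → EuclideanSpace ℝ (Fin n)) (η : ℝ)
    (c : Fin n → ℝ) :
    spectralSum v (truncInv η c)
      = ∑ i, if η ≤ c i then (c i)⁻¹ • vecMulVec (toPi (v i)) (toPi (v i)) else 0 :=
  Finset.sum_congr rfl fun i _ => by by_cases h : η ≤ c i <;> simp [truncInv, h]

lemma spectralSum_truncIndicator_eq_sum (v : Fin n → EuclideanSpace ℝ (Fin n)) (η : ℝ)
    (c : Fin n → ℝ) :
    spectralSum v (truncIndicator η c)
      = ∑ i, if η ≤ c i then vecMulVec (toPi (v i)) (toPi (v i)) else 0 :=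
  Finset.sum_congr rfl fun i _ => by by_cases h : η ≤ c i <;> simp [truncIndicator, h]

section Stability

variable {v w : Fin n → EuclideanSpace ℝ (Fin n)} (hv : Orthonormal ℝ v) (hw : Orthonormal ℝ w)
  {η : ℝ} (hη : 0 < η) (lam : Fin n → ℝ) {mu : Fin n → ℝ}
include hv hw hη

lemma norm_spectralSum_one_sub_truncIndicator_mul_le (hmu : 0 ≤ mu) :
    ‖spectralSum w (1 - truncIndicator (η / 2) mu) * spectralSum v (truncIndicator η lam)‖
      ≤ 2 * ‖spectralSum v lam - spectralSum w mu‖ / η := by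
  set P := spectralSum w (1 - truncIndicator (η / 2) mu)
  set Q := spectralSum v (truncIndicator η lam)
  set R := spectralSum v (truncInv η lam)
  set S := spectralSum w ((1 - truncIndicator (η / 2) mu) * mu)
  have hQR : Q * R = R := by
    rw [spectralSum_mul_spectralSum hv, mul_comm, truncInv_mul_truncIndicator]
  have hAR : spectralSum v lam * R = Q := by
    rw [spectralSum_mul_spectralSum hv, mul_truncInv hη]
  have hPA : P * spectralSum w mu = S := spectralSum_mul_spectralSum hw _ _
  have hSP : S * P = S := by
    rw [spectralSum_mul_spectralSum hw, mul_right_comm, one_sub_truncIndicator_mul_self]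
  have key : P * Q = P * (spectralSum v lam - spectralSum w mu) * R + S * (P * Q) * R :=
    calc P * Q = P * (spectralSum v lam - spectralSum w mu) * R + P * spectralSum w mu * R := by
          rw [← hAR]; noncomm_ring
      _ = P * (spectralSum v lam - spectralSum w mu) * R + S * P * (Q * R) := by
          rw [hPA, hQR, hSP]
      _ = P * (spectralSum v lam - spectralSum w mu) * R + S * (P * Q) * R := by
          simp only [Matrix.mul_assoc]
  have hR : ‖R‖ ≤ η⁻¹ := norm_spectralSum_truncInv_le hv hη lam
  have hP : ‖P‖ ≤ 1 := (norm_spectralSum hw _).trans_le (norm_one_sub_truncIndicator_le _ _)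
  have hS : ‖S‖ ≤ η / 2 :=
    (norm_spectralSum hw _).trans_le (norm_one_sub_truncIndicator_mul_le (by positivity) hmu)
  refine (norm_le_two_mul_of_eq_add_mul_mul key ?_).trans ?_
  · calc ‖S‖ * ‖R‖ ≤ η / 2 * η⁻¹ := by gcongr
      _ = 1 / 2 := by field_simp
  · calc 2 * ‖P * (spectralSum v lam - spectralSum w mu) * R‖
        ≤ 2 * (1 * ‖spectralSum v lam - spectralSum w mu‖ * η⁻¹) := by
          gcongr; exact (norm_mul₃_le ..).trans (by gcongr)
      _ = 2 * ‖spectralSum v lam - spectralSum w mu‖ / η := by ring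

lemma norm_spectralSum_truncInv_sub_mul_le (hmu : 0 ≤ mu) :
    ‖(spectralSum v (truncInv η lam) - spectralSum w (truncInv (η / 2) mu))
        * spectralSum v (truncIndicator η lam)‖
      ≤ 4 * ‖spectralSum v lam - spectralSum w mu‖ / η ^ 2 := by
  set P := spectralSum w (1 - truncIndicator (η / 2) mu) with hPdef
  set Q := spectralSum v (truncIndicator η lam)
  set R := spectralSum v (truncInv η lam)
  set B := spectralSum w (truncInv (η / 2) mu)
  set ε := ‖spectralSum v lam - spectralSum w mu‖
  have hRQ : R * Q = R := by rw [spectralSum_mul_spectralSum hv, truncInv_mul_truncIndicator]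
  have hQR : Q * R = R := by
    rw [spectralSum_mul_spectralSum hv, mul_comm, truncInv_mul_truncIndicator]
  have hAR : spectralSum v lam * R = Q := by
    rw [spectralSum_mul_spectralSum hv, mul_truncInv hη]
  have hBA : B * spectralSum w mu = spectralSum w (truncIndicator (η / 2) mu) := by
    rw [spectralSum_mul_spectralSum hw, mul_comm, mul_truncInv (half_pos hη)]
  have hP : P = 1 - spectralSum w (truncIndicator (η / 2) mu) := by
    rw [hPdef, spectralSum_sub, spectralSum_one hw]
  have decomp : (R - B) * Q = P * Q * R + B * (spectralSum w mu - spectralSum v lam) * R :=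
    calc (R - B) * Q = R - B * (spectralSum v lam * R) := by rw [Matrix.sub_mul, hRQ, hAR]
      _ = (1 - B * spectralSum w mu) * R + B * (spectralSum w mu - spectralSum v lam) * R := by
          noncomm_ring
      _ = P * Q * R + B * (spectralSum w mu - spectralSum v lam) * R := by
          rw [hBA, ← hP, Matrix.mul_assoc P, hQR]
  have hR : ‖R‖ ≤ η⁻¹ := norm_spectralSum_truncInv_le hv hη lam
  have hB : ‖B‖ ≤ 2 / η := by simpa using norm_spectralSum_truncInv_le hw (half_pos hη) mu
  have hPQ := norm_spectralSum_one_sub_truncIndicator_mul_le hv hw hη lam hmu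
  calc ‖(R - B) * Q‖
        ≤ ‖P * Q‖ * ‖R‖ + ‖B‖ * ‖spectralSum w mu - spectralSum v lam‖ * ‖R‖ := by
        rw [decomp]
        exact (norm_add_le _ _).trans (add_le_add (norm_mul_le _ _) (norm_mul₃_le ..))
    _ = ‖P * Q‖ * ‖R‖ + ‖B‖ * ε * ‖R‖ := by rw [norm_sub_rev]
    _ ≤ 2 * ε / η * η⁻¹ + 2 / η * ε * η⁻¹ := by gcongr
    _ = 4 * ε / η ^ 2 := by ring

lemma norm_spectralSum_truncInv_sub_mul_le_three_div :
    ‖(spectralSum v (truncInv η lam) - spectralSum w (truncInv (η / 2) mu))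
        * spectralSum v (truncIndicator η lam)‖ ≤ 3 / η := by
  calc _ ≤ (‖spectralSum v (truncInv η lam)‖ + ‖spectralSum w (truncInv (η / 2) mu)‖)
          * ‖spectralSum v (truncIndicator η lam)‖ :=
        (norm_mul_le _ _).trans (by gcongr; exact norm_sub_le _ _)
    _ ≤ (η⁻¹ + (η / 2)⁻¹) * 1 := by
        gcongr
        exacts [norm_spectralSum_truncInv_le hv hη _,
          norm_spectralSum_truncInv_le hw (half_pos hη) _, (norm_spectralSum hv _).trans_le (norm_truncIndicator_le _ _)]
    _ = 3 / η := by field_simp; norm_num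

end Stability

/-- `A` and `Ã` are given by their spectral decompositions in the orthonormal eigenbases `v`, `w`;
the three sums on the left are `A_{≥η}^{-1}`, `Ã_{≥η/2}^{-1}` and `Π_V`. -/
theorem pseudoinverse_stability_general {n : ℕ} (η : ℝ) (hη : 0 < η)
    (A Atil : Matrix (Fin n) (Fin n) ℝ)
    (v w : Fin n → EuclideanSpace ℝ (Fin n)) (lam mu : Fin n → ℝ)
    (hv : Orthonormal ℝ v) (hw : Orthonormal ℝ w)
    (hmu : ∀ i, 0 ≤ mu i)
    (hA : A = ∑ i, lam i • Matrix.vecMulVec (toPi (v i)) (toPi (v i)))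
    (hAtil : Atil = ∑ i, mu i • Matrix.vecMulVec (toPi (w i)) (toPi (w i))) :
    specNorm
        (((∑ i, if η ≤ lam i then
              (lam i)⁻¹ • Matrix.vecMulVec (toPi (v i)) (toPi (v i)) else 0)
          - ∑ i, if η / 2 ≤ mu i then
              (mu i)⁻¹ • Matrix.vecMulVec (toPi (w i)) (toPi (w i)) else 0)
          * ∑ i, if η ≤ lam i then Matrix.vecMulVec (toPi (v i)) (toPi (v i)) else 0)
      ≤ 20 * frobNorm A * Real.sqrt (specNorm (A - Atil)) / η ^ ((5 : ℝ) / 2) := by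
  rw [← spectralSum_truncInv_eq_sum, ← spectralSum_truncInv_eq_sum,
    ← spectralSum_truncIndicator_eq_sum, specNorm_eq_norm, specNorm_eq_norm]
  change A = spectralSum v lam at hA
  change Atil = spectralSum w mu at hAtil
  subst hA hAtil
  by_cases hV : ∃ j, η ≤ lam j
  · obtain ⟨j, hj⟩ := hV
    have hf : η ≤ frobNorm (spectralSum v lam) :=
      calc η ≤ ‖lam‖ := hj.trans ((le_abs_self _).trans (norm_le_pi_norm lam j))
        _ = specNorm (spectralSum v lam) := (norm_spectralSum hv lam).symm
        _ ≤ frobNorm (spectralSum v lam) := specNorm_le_frobNorm _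
    exact le_of_le_four_mul_div_sq_of_le_three_div hη (norm_nonneg _) hf
      (norm_spectralSum_truncInv_sub_mul_le hv hw hη lam hmu)
      (norm_spectralSum_truncInv_sub_mul_le_three_div hv hw hη lam)
  · have hQ : truncIndicator η lam = 0 := funext fun j => if_neg fun hj => hV ⟨j, hj⟩
    rw [hQ, spectralSum_zero, mul_zero, norm_zero]
    exact div_nonneg (by simp only [frobNorm]; positivity) (by positivity)

/-- stability of the truncated pseudoinverse.  Here `A` and `Ã` are given
by spectral decompositions `A = Σᵢ λᵢ vᵢvᵢᵀ`, `Ã = Σᵢ μᵢ wᵢwᵢᵀ` with orthonormal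
eigenvector bases; the `η`-truncated pseudoinverse of `A` is
`Σ_{λᵢ ≥ η} λᵢ⁻¹ vᵢvᵢᵀ`, and `Π_V = Σ_{λᵢ ≥ η} vᵢvᵢᵀ`. -/
theorem pseudoinverse_stability {n : ℕ} (η : ℝ) (hη : 0 < η)
    (A Atil : Matrix (Fin n) (Fin n) ℝ)
    (v w : Fin n → EuclideanSpace ℝ (Fin n)) (lam mu : Fin n → ℝ)
    (hv : Orthonormal ℝ v) (hw : Orthonormal ℝ w)
    (hlam : ∀ i, 0 ≤ lam i) (hmu : ∀ i, 0 ≤ mu i)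
    (hA : A = ∑ i, lam i • Matrix.vecMulVec (toPi (v i)) (toPi (v i)))
    (hAtil : Atil = ∑ i, mu i • Matrix.vecMulVec (toPi (w i)) (toPi (w i))) :
    specNorm
        (((∑ i, if η ≤ lam i then
              (lam i)⁻¹ • Matrix.vecMulVec (toPi (v i)) (toPi (v i)) else 0)
          - ∑ i, if η / 2 ≤ mu i then
              (mu i)⁻¹ • Matrix.vecMulVec (toPi (w i)) (toPi (w i)) else 0)
          * ∑ i, if η ≤ lam i then Matrix.vecMulVec (toPi (v i)) (toPi (v i)) else 0)
      ≤ 20 * frobNorm A * Real.sqrt (specNorm (A - Atil)) / η ^ ((5 : ℝ) / 2) :=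
  pseudoinverse_stability_general η hη A Atil v w lam mu hv hw hmu hA hAtil
end

section
/- Let n, M ∈ ℕ, let η > 0, let B be a real n×M matrix, and let N̂ be a real positive semidefinite M×M matrix with spectral decomposition N̂ = Σᵢ λᵢ vᵢvᵢᵀ, where v₁,…,v_M form an orthonormal basis of eigenvectors with eigenvalues λᵢ ≥ 0. Let Ŵ be the M×M matrix whose i-th row equals λᵢ^{-1/2}·vᵢᵀ if λᵢ ≥ η/4 and is zero otherwise, and let Î be the M×M diagonal matrix whose i-th diagonal entry is 1 if λᵢ ≥ η/4 and 0 otherwise. Then ‖Î − Ŵ·(BᵀB)·Ŵᵀ‖_F ≤ (4/η)·‖N̂ − BᵀB‖_F. -/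
open MeasureTheory Matrix

/-!
Write `N̂ = V Λ Vᵀ` with `V` the orthogonal matrix whose columns are the `vᵢ`, and
`Ŵ = D Vᵀ` with `D` diagonal, `Dᵢᵢ = λᵢ^{-1/2}` on the retained eigenvalues and `0` elsewhere.
Then `Ŵ N̂ Ŵᵀ = D Λ D = Î`, so `Î - Ŵ BᵀB Ŵᵀ = D (Vᵀ (N̂ - BᵀB) V) D`.
Conjugation by `V` preserves the Frobenius norm, and since `Dᵢᵢ² ≤ 4/η`,
scaling rows and columns by `D` multiplies it by at most `4/η`.
-/

section Frobenius

variable {m : ℕ}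

lemma sum_sq_eq_trace_transpose_mul {ι κ : Type*} [Fintype ι] [Fintype κ]
    (A : Matrix ι κ ℝ) : ∑ i, ∑ j, A i j ^ 2 = trace (Aᵀ * A) := by
  simp only [trace, diag, mul_apply, transpose_apply, sq]
  exact Finset.sum_comm

lemma frobNorm_transpose_mul_mul_eq {V : Matrix (Fin m) (Fin m) ℝ} (hV : Vᵀ * V = 1)
    (A : Matrix (Fin m) (Fin m) ℝ) : frobNorm (Vᵀ * A * V) = frobNorm A := by
  have hV' : V * Vᵀ = 1 := mul_eq_one_comm.mp hV
  have hgram : (Vᵀ * A * V)ᵀ * (Vᵀ * A * V) = Vᵀ * (Aᵀ * A) * V := by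
    calc (Vᵀ * A * V)ᵀ * (Vᵀ * A * V) = Vᵀ * Aᵀ * (V * Vᵀ) * A * V := by
          simp only [transpose_mul, transpose_transpose]; noncomm_ring
      _ = Vᵀ * (Aᵀ * A) * V := by rw [hV', mul_one]; noncomm_ring
  unfold frobNorm
  rw [sum_sq_eq_trace_transpose_mul, sum_sq_eq_trace_transpose_mul, hgram, trace_mul_cycle,
    ← mul_assoc, hV', one_mul]

lemma frobNorm_diagonal_mul_mul_diagonal_le {d : Fin m → ℝ} {c : ℝ} (hc : 0 ≤ c)
    (hd : ∀ i, d i ^ 2 ≤ c) (A : Matrix (Fin m) (Fin m) ℝ) :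
    frobNorm (diagonal d * A * diagonal d) ≤ c * frobNorm A := by
  have hsum : ∑ i, ∑ j, (diagonal d * A * diagonal d) i j ^ 2 ≤ c ^ 2 * ∑ i, ∑ j, A i j ^ 2 := by
    simp only [Finset.mul_sum, mul_diagonal, diagonal_mul]
    gcongr with i _ j _
    calc (d i * A i j * d j) ^ 2 = d i ^ 2 * d j ^ 2 * A i j ^ 2 := by ring
      _ ≤ c * c * A i j ^ 2 := by gcongr <;> exact hd _
      _ = c ^ 2 * A i j ^ 2 := by ring
  calc frobNorm (diagonal d * A * diagonal d) ≤ Real.sqrt (c ^ 2 * ∑ i, ∑ j, A i j ^ 2) :=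
        Real.sqrt_le_sqrt hsum
    _ = c * frobNorm A := by rw [Real.sqrt_mul (sq_nonneg c), Real.sqrt_sq hc, frobNorm]

end Frobenius

lemma Orthonormal.transpose_mul_self_eq_one {ι κ : Type*} [Fintype ι] [DecidableEq ι]
    [Fintype κ] {v : ι → EuclideanSpace ℝ κ} (hv : Orthonormal ℝ v) :
    (of fun k i => v i k)ᵀ * (of fun k i => v i k) = 1 := by
  ext i j
  rw [orthonormal_iff_ite] at hv
  simpa [mul_apply, one_apply, PiLp.inner_apply, mul_comm] using hv i j

lemma sum_smul_vecMulVec_eq_mul_diagonal_mul_transpose {ι κ R : Type*} [Fintype ι]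
    [DecidableEq ι] [CommSemiring R] (V : Matrix κ ι R) (lam : ι → R) :
    ∑ i, lam i • vecMulVec (fun k => V k i) (fun k => V k i) = V * diagonal lam * Vᵀ := by
  ext k l
  rw [mul_apply]
  simp only [Matrix.sum_apply, Matrix.smul_apply, vecMulVec_apply, mul_diagonal, transpose_apply,
    smul_eq_mul]
  exact Finset.sum_congr rfl fun i _ => by ring

noncomputable def truncInvSqrt (τ x : ℝ) : ℝ := if τ ≤ x then x ^ (-(1 : ℝ) / 2) else 0

lemma Real.rpow_neg_half_mul_self {x : ℝ} (hx : 0 < x) :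
    x ^ (-(1 : ℝ) / 2) * x ^ (-(1 : ℝ) / 2) = x⁻¹ := by
  rw [← Real.rpow_add hx, ← Real.rpow_neg_one]
  norm_num

lemma truncInvSqrt_mul_mul_self {τ : ℝ} (hτ : 0 < τ) (x : ℝ) :
    truncInvSqrt τ x * x * truncInvSqrt τ x = if τ ≤ x then 1 else 0 := by
  unfold truncInvSqrt
  split_ifs with h
  · have hx : 0 < x := hτ.trans_le h
    rw [mul_right_comm, Real.rpow_neg_half_mul_self hx, inv_mul_cancel₀ hx.ne']
  · ring

lemma truncInvSqrt_sq_le {τ : ℝ} (hτ : 0 < τ) (x : ℝ) : truncInvSqrt τ x ^ 2 ≤ τ⁻¹ := by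
  unfold truncInvSqrt
  split_ifs with h
  · rw [sq, Real.rpow_neg_half_mul_self (hτ.trans_le h)]
    exact inv_anti₀ hτ h
  · simp [hτ.le]

theorem almost_isometry_general {n M : ℕ} (η : ℝ) (hη : 0 < η)
    (B : Matrix (Fin n) (Fin M) ℝ) (Nhat : Matrix (Fin M) (Fin M) ℝ)
    (v : Fin M → EuclideanSpace ℝ (Fin M)) (lam : Fin M → ℝ)
    (hv : Orthonormal ℝ v)
    (hN : Nhat = ∑ i, lam i • Matrix.vecMulVec (toPi (v i)) (toPi (v i))) :
    frobNorm
        ((Matrix.diagonal fun i => if η / 4 ≤ lam i then (1 : ℝ) else 0)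
          - (Matrix.of fun i j =>
                if η / 4 ≤ lam i then (lam i) ^ (-(1 : ℝ) / 2) * toPi (v i) j else 0)
            * (Bᵀ * B)
            * (Matrix.of fun i j =>
                if η / 4 ≤ lam i then (lam i) ^ (-(1 : ℝ) / 2) * toPi (v i) j else 0)ᵀ)
      ≤ (4 / η) * frobNorm (Nhat - Bᵀ * B) := by
  have hτ : 0 < η / 4 := by positivity
  set V : Matrix (Fin M) (Fin M) ℝ := of fun k i => v i k
  set D : Matrix (Fin M) (Fin M) ℝ := diagonal fun i => truncInvSqrt (η / 4) (lam i)
  have hV : Vᵀ * V = 1 := hv.transpose_mul_self_eq_one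
  have hW : (of fun i j => if η / 4 ≤ lam i then lam i ^ (-(1 : ℝ) / 2) * toPi (v i) j else 0)
      = D * Vᵀ := by
    ext i j
    by_cases h : η / 4 ≤ lam i <;> simp [D, V, truncInvSqrt, toPi, h]
  have hNhat : Nhat = V * diagonal lam * Vᵀ :=
    hN.trans (sum_smul_vecMulVec_eq_mul_diagonal_mul_transpose V lam)
  have hI : (diagonal fun i => if η / 4 ≤ lam i then (1 : ℝ) else 0) = D * diagonal lam * D := by
    simp only [D, diagonal_mul_diagonal, truncInvSqrt_mul_mul_self hτ]
  have hconj : (diagonal fun i => if η / 4 ≤ lam i then (1 : ℝ) else 0)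
      - D * Vᵀ * (Bᵀ * B) * (D * Vᵀ)ᵀ = D * (Vᵀ * (Nhat - Bᵀ * B) * V) * D := by
    rw [hI, hNhat, transpose_mul, diagonal_transpose]
    calc D * diagonal lam * D - D * Vᵀ * (Bᵀ * B) * (V * D)
        = D * (Vᵀ * V) * diagonal lam * (Vᵀ * V) * D - D * Vᵀ * (Bᵀ * B) * (V * D) := by
          rw [hV, mul_one, mul_one]
      _ = _ := by noncomm_ring
  rw [hW, hconj, ← inv_div]
  calc frobNorm (D * (Vᵀ * (Nhat - Bᵀ * B) * V) * D)
      ≤ (η / 4)⁻¹ * frobNorm (Vᵀ * (Nhat - Bᵀ * B) * V) :=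
        frobNorm_diagonal_mul_mul_diagonal_le (by positivity) (truncInvSqrt_sq_le hτ <| lam ·) _
    _ = (η / 4)⁻¹ * frobNorm (Nhat - Bᵀ * B) := by rw [frobNorm_transpose_mul_mul_eq hV]

/-- near-isometry of `Ŵ B ᵀ`.  Here `N̂ = Σᵢ λᵢ vᵢvᵢᵀ` is psd with
orthonormal eigenbasis `v`, `Ŵ` has `i`-th row `λᵢ^{-1/2} vᵢᵀ` when `λᵢ ≥ η/4` (zero
otherwise) and `Î` is the corresponding 0/1 diagonal matrix. -/
theorem almost_isometry {n M : ℕ} (η : ℝ) (hη : 0 < η)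
    (B : Matrix (Fin n) (Fin M) ℝ) (Nhat : Matrix (Fin M) (Fin M) ℝ)
    (v : Fin M → EuclideanSpace ℝ (Fin M)) (lam : Fin M → ℝ)
    (hv : Orthonormal ℝ v) (hlam : ∀ i, 0 ≤ lam i)
    (hN : Nhat = ∑ i, lam i • Matrix.vecMulVec (toPi (v i)) (toPi (v i))) :
    frobNorm
        ((Matrix.diagonal fun i => if η / 4 ≤ lam i then (1 : ℝ) else 0)
          - (Matrix.of fun i j =>
                if η / 4 ≤ lam i then (lam i) ^ (-(1 : ℝ) / 2) * toPi (v i) j else 0)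
            * (Bᵀ * B)
            * (Matrix.of fun i j =>
                if η / 4 ≤ lam i then (lam i) ^ (-(1 : ℝ) / 2) * toPi (v i) j else 0)ᵀ)
      ≤ (4 / η) * frobNorm (Nhat - Bᵀ * B) :=
  almost_isometry_general η hη B Nhat v lam hv hN
end
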